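/- arXiv:math/0010076 — 2 statements merged into one kernel-verified Lean document; each statement's English description precedes it below -/
import Mathlib

section
/- There is an absolute constant C such that for every M,N∈ℕ and every complex M×N matrix A=(a_{jk}) one has h_2(A) ≤ C·sup_{1≤j≤M} Σ_{k=0}^{N}|a_{jk}−a_{j,k+1}|, where by convention a_{j0}=a_{j,N+1}=0 for all 1≤j≤M. -/
open MeasureTheory
open scoped ENNReal NNReal

noncomputable section

/-- Lebesgue measure on `Ω = [0,1)`. -/
def μΩ : Measure ℝ := volume.restrict (Set.Ico (0:ℝ) 1)

/-- Dyadic conditional expectation `E_k f` on `[0,1)`: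
`E_k f = Σ_i (2^k ∫_{I_{k,i}} f) χ_{I_{k,i}}`, written via the dyadic interval of
generation `k` containing the point `x`. -/
def condE (k : ℕ) (f : ℝ → ℂ) (x : ℝ) : ℂ :=
  (2:ℂ) ^ k *
    ∫ t in Set.Ico ((⌊(2:ℝ) ^ k * x⌋ : ℝ) / (2:ℝ) ^ k)
        (((⌊(2:ℝ) ^ k * x⌋ : ℝ) + 1) / (2:ℝ) ^ k), f t

/-- Dyadic martingale difference `Δ_k = E_k − E_{k−1}` (used for `k ≥ 1`). -/
def mdiff (k : ℕ) (f : ℝ → ℂ) (x : ℝ) : ℂ := condE k f x - condE (k - 1) f x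

/-- `x ↦ max_{1≤j≤M} |Σ_{k=1}^N a_{jk} Δ_k f(x)|`. -/
def maxFn {M N : ℕ} (A : Fin M → Fin N → ℂ) (f : ℝ → ℂ) (x : ℝ) : ℝ :=
  ⨆ j : Fin M, ‖∑ k : Fin N, A j k * mdiff ((k : ℕ) + 1) f x‖

/-- The strong constant `h_p(A)`: the least `K` with
`‖max_j |Σ_k a_{jk} Δ_k f|‖_{L_p} ≤ K ‖f‖_{L_p}` for all `f ∈ L_p(Ω)`. -/
def hStrong (p : ℝ) {M N : ℕ} (A : Fin M → Fin N → ℂ) : ℝ≥0∞ :=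
  sInf {K : ℝ≥0∞ | ∀ f : ℝ → ℂ, MemLp f (ENNReal.ofReal p) μΩ →
    eLpNorm (maxFn A f) (ENNReal.ofReal p) μΩ ≤ K * eLpNorm f (ENNReal.ofReal p) μΩ}

/-- Weak `L_p` quasinorm `sup_{λ>0} λ·|{|g|>λ}|^{1/p}` on `[0,1)`. -/
def weakNorm (p : ℝ) (g : ℝ → ℝ) : ℝ≥0∞ :=
  ⨆ (l : ℝ) (_ : 0 < l), ENNReal.ofReal l * μΩ {x | l < |g x|} ^ (1 / p)

/-- The weak constant `h_p^w(A)`. -/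
def hWeak (p : ℝ) {M N : ℕ} (A : Fin M → Fin N → ℂ) : ℝ≥0∞ :=
  sInf {K : ℝ≥0∞ | ∀ f : ℝ → ℂ, MemLp f (ENNReal.ofReal p) μΩ →
    weakNorm p (maxFn A f) ≤ K * eLpNorm f (ENNReal.ofReal p) μΩ}

/-- Entries of `A` extended by the convention `a_{j,0} = a_{j,N+1} = 0`,
with the original entries `a_{j,k}` for `1 ≤ k ≤ N`. -/
def aExt {M N : ℕ} (A : Fin M → Fin N → ℂ) (j : Fin M) (k : ℕ) : ℂ :=
  if h : 1 ≤ k ∧ k ≤ N then A j ⟨k - 1, by omega⟩ else 0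

/-!
Summation by parts turns `∑ₖ a_{jk} Δₖ f` into `∑ₖ (a_{jk} - a_{j,k+1}) Eₖ f`, so the maximal
function `maxFn A f` is bounded pointwise by the largest row variation of `A` times the dyadic
maximal function `max_{k ≤ N} |Eₖ f|`, and Doob's inequality bounds the latter in `L²` by `2 ‖f‖₂`;
hence `C = 2` works. Doob's inequality follows from its weak form `λ |{M > λ}| ≤ ∫_{M > λ} |f|` by
the layer-cake formula and Cauchy–Schwarz. The weak form is proved on each dyadic interval `I` of
level `m` by induction on the number of levels: `Eₘ f` is constant on `I`; if `|Eₘ f| > λ` there,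
then `λ |I| ≤ ∫_I |f|`, and otherwise level `m` drops out and `I` splits into its two halves.
-/

open Set

theorem eLpNorm_two_le_two_mul_of_weakType {α : Type*} [MeasurableSpace α] {μ : Measure α}
    {T : α → ℝ} {φ : α → ℝ≥0∞} (hT_nonneg : 0 ≤ T) (hT_meas : Measurable T)
    (hT : eLpNorm T 2 μ ≠ ∞) (hφ : AEMeasurable φ μ)
    (hweak : ∀ t > 0, ENNReal.ofReal t * μ {x | t < T x} ≤ ∫⁻ x in {x | t < T x}, φ x ∂μ) :
    eLpNorm T 2 μ ≤ 2 * eLpNorm φ 2 μ := by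
  have hT_enorm : ∀ x, ‖T x‖ₑ = ENNReal.ofReal (T x) := fun x => Real.enorm_eq_ofReal (hT_nonneg x)
  have hT_aemeas : AEMeasurable (fun x => ENNReal.ofReal (T x)) μ :=
    (ENNReal.measurable_ofReal.comp hT_meas).aemeasurable
  have hsq : eLpNorm T 2 μ ^ 2 = ∫⁻ x, ENNReal.ofReal (T x ^ (2:ℝ)) ∂μ := by
    have := eLpNorm_nnreal_pow_eq_lintegral (f := T) (μ := μ) (p := 2) two_ne_zero
    simp only [NNReal.coe_ofNat, ENNReal.coe_ofNat] at this
    rw [← ENNReal.rpow_two, this]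
    refine lintegral_congr fun x => ?_
    rw [hT_enorm, ENNReal.ofReal_rpow_of_nonneg (hT_nonneg x) zero_le_two]
  have holder : ∫⁻ x, φ x * ENNReal.ofReal (T x) ∂μ ≤ eLpNorm φ 2 μ * eLpNorm T 2 μ := by
    have h := ENNReal.lintegral_mul_le_Lp_mul_Lq μ Real.HolderConjugate.two_two hφ hT_aemeas
    simp only [eLpNorm_eq_lintegral_rpow_enorm_toReal two_ne_zero ENNReal.ofNat_ne_top,
      enorm_eq_self, hT_enorm, ENNReal.toReal_ofNat]
    exact h
  have layer_cake : eLpNorm T 2 μ ^ 2 ≤ 2 * ∫⁻ x, φ x * ENNReal.ofReal (T x) ∂μ := by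
    calc eLpNorm T 2 μ ^ 2
        = 2 * ∫⁻ t in Ioi 0, μ {x | t < T x} * ENNReal.ofReal t := by
          rw [hsq, lintegral_rpow_eq_lintegral_meas_lt_mul μ (ae_of_all _ hT_nonneg)
            hT_meas.aemeasurable two_pos]
          norm_num
      -- the right side of `hweak` is the tail of `T` under `μ.withDensity φ`
      _ ≤ 2 * ∫⁻ t in Ioi 0, μ.withDensity φ {x | t < T x} := by
          gcongr 2 * ?_
          refine setLIntegral_mono' measurableSet_Ioi fun t ht => ?_
          rw [withDensity_apply _ (measurableSet_lt measurable_const hT_meas), mul_comm]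
          exact hweak t ht
      _ = 2 * ∫⁻ x, φ x * ENNReal.ofReal (T x) ∂μ := by
          rw [← lintegral_eq_lintegral_meas_lt _ (ae_of_all _ hT_nonneg) hT_meas.aemeasurable,
            lintegral_withDensity_eq_lintegral_mul₀ hφ hT_aemeas]
          rfl
  have hsq_le : eLpNorm T 2 μ * eLpNorm T 2 μ ≤ 2 * eLpNorm φ 2 μ * eLpNorm T 2 μ := by
    rw [← sq, mul_assoc]
    exact layer_cake.trans (by gcongr)
  rcases eq_or_ne (eLpNorm T 2 μ) 0 with h0 | h0
  · simp [h0]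
  · exact (ENNReal.mul_le_mul_iff_left h0 hT).mp hsq_le

def dyadicIco (k : ℕ) (i : ℤ) : Set ℝ := Ico ((i : ℝ) / 2 ^ k) ((i + 1) / 2 ^ k)

theorem measurableSet_dyadicIco (k : ℕ) (i : ℤ) : MeasurableSet (dyadicIco k i) :=
  measurableSet_Ico

theorem volume_dyadicIco (k : ℕ) (i : ℤ) : volume (dyadicIco k i) = (2 ^ k)⁻¹ := by
  have h : ((i : ℝ) + 1) / 2 ^ k - i / 2 ^ k = (2 ^ k)⁻¹ := by ring
  rw [dyadicIco, Real.volume_Ico, h, ENNReal.ofReal_inv_of_pos (by positivity),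
    ENNReal.ofReal_pow zero_le_two, ENNReal.ofReal_ofNat]

theorem floor_eq_of_mem_dyadicIco {k : ℕ} {i : ℤ} {x : ℝ} (hx : x ∈ dyadicIco k i) :
    ⌊(2 : ℝ) ^ k * x⌋ = i := by
  obtain ⟨h₁, h₂⟩ := hx
  rw [div_le_iff₀ (by positivity)] at h₁
  rw [lt_div_iff₀ (by positivity)] at h₂
  rw [Int.floor_eq_iff]
  constructor <;> linarith

theorem mem_dyadicIco_floor (k : ℕ) (x : ℝ) : x ∈ dyadicIco k ⌊(2 : ℝ) ^ k * x⌋ := by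
  have hk : (0 : ℝ) < 2 ^ k := by positivity
  constructor
  · rw [div_le_iff₀ hk, mul_comm]; exact Int.floor_le _
  · rw [lt_div_iff₀ hk, mul_comm]; exact Int.lt_floor_add_one _

theorem dyadicIco_union (m : ℕ) (i : ℤ) :
    dyadicIco (m + 1) (2 * i) ∪ dyadicIco (m + 1) (2 * i + 1) = dyadicIco m i := by
  have h₁ : ((2 * i : ℤ) : ℝ) / 2 ^ (m + 1) = i / 2 ^ m := by push_cast; ring
  have h₂ : (((2 * i : ℤ) : ℝ) + 1) / 2 ^ (m + 1) = ((2 * i + 1 : ℤ) : ℝ) / 2 ^ (m + 1) := by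
    push_cast; ring
  have h₃ : (((2 * i + 1 : ℤ) : ℝ) + 1) / 2 ^ (m + 1) = (i + 1) / 2 ^ m := by push_cast; ring
  rw [dyadicIco, dyadicIco, dyadicIco, h₁, h₂, h₃]
  apply Ico_union_Ico_eq_Ico
  · rw [← h₁, ← h₂]
    exact div_le_div_of_nonneg_right (by push_cast; linarith) (by positivity)
  · rw [← h₂, ← h₃]
    exact div_le_div_of_nonneg_right (by push_cast; linarith) (by positivity)

theorem disjoint_dyadicIco (m : ℕ) (i : ℤ) :
    Disjoint (dyadicIco (m + 1) (2 * i)) (dyadicIco (m + 1) (2 * i + 1)) := by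
  have h : (((2 * i : ℤ) : ℝ) + 1) / 2 ^ (m + 1) = ((2 * i + 1 : ℤ) : ℝ) / 2 ^ (m + 1) := by
    push_cast; ring
  rw [dyadicIco, dyadicIco, h]
  exact Ico_disjoint_Ico_same

theorem dyadicIco_zero_zero : dyadicIco 0 0 = Ico 0 1 := by
  simp [dyadicIco]

theorem dyadicIco_floor_subset {k : ℕ} {x : ℝ} (hx : x ∈ Ico (0 : ℝ) 1) :
    dyadicIco k ⌊(2 : ℝ) ^ k * x⌋ ⊆ Ico 0 1 := by
  have hk : (0 : ℝ) < 2 ^ k := by positivity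
  have h₀ : (0 : ℝ) ≤ ⌊(2 : ℝ) ^ k * x⌋ := by
    exact_mod_cast Int.floor_nonneg.mpr (mul_nonneg hk.le hx.1)
  have h₁ : (⌊(2 : ℝ) ^ k * x⌋ : ℝ) + 1 ≤ 2 ^ k := by
    have : ⌊(2 : ℝ) ^ k * x⌋ < 2 ^ k := by
      rw [Int.floor_lt]; push_cast; nlinarith [hx.2]
    exact_mod_cast this
  apply Ico_subset_Ico
  · positivity
  · rwa [div_le_one hk]

theorem condE_eq_of_mem_dyadicIco {k : ℕ} {i : ℤ} {x : ℝ} (f : ℝ → ℂ) (hx : x ∈ dyadicIco k i) :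
    condE k f x = 2 ^ k * ∫ t in dyadicIco k i, f t := by
  rw [condE, floor_eq_of_mem_dyadicIco hx]
  rfl

theorem measurable_condE (k : ℕ) (f : ℝ → ℂ) : Measurable (condE k f) :=
  (Measurable.of_discrete (f := fun i : ℤ => (2 : ℂ) ^ k * ∫ t in dyadicIco k i, f t)).comp
    (Int.measurable_floor.comp (measurable_const_mul _))

theorem enorm_condE_le (k : ℕ) (f : ℝ → ℂ) (x : ℝ) :
    ‖condE k f x‖ₑ ≤ 2 ^ k * ∫⁻ t in dyadicIco k ⌊(2 : ℝ) ^ k * x⌋, ‖f t‖ₑ := by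
  rw [condE_eq_of_mem_dyadicIco f (mem_dyadicIco_floor k x), enorm_mul]
  gcongr
  · rw [← ofReal_norm]; simp
  · exact enorm_integral_le_lintegral_enorm _

theorem ofReal_mul_volume_le_of_lt_norm_condE {k : ℕ} {i : ℤ} {x t : ℝ} {f : ℝ → ℂ}
    (hx : x ∈ dyadicIco k i) (ht : t < ‖condE k f x‖) :
    ENNReal.ofReal t * volume (dyadicIco k i) ≤ ∫⁻ y in dyadicIco k i, ‖f y‖ₑ := by
  have h2k : (2 : ℝ≥0∞) ^ k ≠ 0 := by positivity
  have h2k' : (2 : ℝ≥0∞) ^ k ≠ ∞ := ENNReal.pow_ne_top ENNReal.ofNat_ne_top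
  calc ENNReal.ofReal t * volume (dyadicIco k i)
      ≤ ‖condE k f x‖ₑ * (2 ^ k)⁻¹ := by
        rw [volume_dyadicIco, ← ofReal_norm]
        gcongr
    _ ≤ 2 ^ k * (∫⁻ y in dyadicIco k i, ‖f y‖ₑ) * (2 ^ k)⁻¹ := by
        gcongr
        simpa only [floor_eq_of_mem_dyadicIco hx] using enorm_condE_le k f x
    _ = ∫⁻ y in dyadicIco k i, ‖f y‖ₑ := by
        rw [mul_comm, ← mul_assoc, ENNReal.inv_mul_cancel h2k h2k', one_mul]

def dyadicMaximal (f : ℝ → ℂ) (m n : ℕ) (x : ℝ) : ℝ≥0 :=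
  (Finset.Icc m n).sup fun k => ‖condE k f x‖₊

theorem nnnorm_condE_le_dyadicMaximal {f : ℝ → ℂ} {m k n : ℕ} (hmk : m ≤ k) (hkn : k ≤ n)
    (x : ℝ) : ‖condE k f x‖₊ ≤ dyadicMaximal f m n x :=
  Finset.le_sup (f := fun k => ‖condE k f x‖₊) (Finset.mem_Icc.mpr ⟨hmk, hkn⟩)

theorem dyadicMaximal_self (f : ℝ → ℂ) (m : ℕ) (x : ℝ) :
    dyadicMaximal f m m x = ‖condE m f x‖₊ := by
  simp [dyadicMaximal]

theorem dyadicMaximal_eq_max (f : ℝ → ℂ) {m n : ℕ} (h : m ≤ n) (x : ℝ) :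
    dyadicMaximal f m n x = max ‖condE m f x‖₊ (dyadicMaximal f (m + 1) n x) := by
  rw [dyadicMaximal, dyadicMaximal, ← Finset.insert_Icc_add_one_left_eq_Icc h, Finset.sup_insert]

theorem measurable_dyadicMaximal (f : ℝ → ℂ) (m n : ℕ) : Measurable (dyadicMaximal f m n) := by
  have h : dyadicMaximal f m n = (Finset.Icc m n).sup fun k x => ‖condE k f x‖₊ := by
    ext x
    simp [dyadicMaximal, Finset.sup_apply]
  rw [h]
  exact Finset.sup_induction measurable_const (fun _ hg _ hh => hg.sup hh)
    fun k _ => (measurable_condE k f).nnnorm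

theorem ofReal_mul_volume_le_of_exists_lt_norm_condE {f : ℝ → ℂ} {m n : ℕ} {i : ℤ} {t : ℝ}
    (hmn : m ≤ n) (h : ∃ x ∈ dyadicIco m i, t < ‖condE m f x‖) :
    ENNReal.ofReal t * volume (dyadicIco m i ∩ {x | t < dyadicMaximal f m n x}) ≤
      ∫⁻ x in dyadicIco m i ∩ {x | t < dyadicMaximal f m n x}, ‖f x‖ₑ := by
  obtain ⟨x, hx, ht⟩ := h
  have hI : dyadicIco m i ∩ {y | t < dyadicMaximal f m n y} = dyadicIco m i := by
    refine inter_eq_left.mpr fun y hy => ?_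
    have hxy : condE m f y = condE m f x := by
      rw [condE_eq_of_mem_dyadicIco f hx, condE_eq_of_mem_dyadicIco f hy]
    calc t < ‖condE m f y‖ := hxy ▸ ht
      _ ≤ dyadicMaximal f m n y := nnnorm_condE_le_dyadicMaximal le_rfl hmn y
  rw [hI]
  exact ofReal_mul_volume_le_of_lt_norm_condE hx ht

theorem dyadicMaximal_weakType (f : ℝ → ℂ) (t : ℝ) (d m : ℕ) (i : ℤ) :
    ENNReal.ofReal t * volume (dyadicIco m i ∩ {x | t < dyadicMaximal f m (m + d) x}) ≤
      ∫⁻ x in dyadicIco m i ∩ {x | t < dyadicMaximal f m (m + d) x}, ‖f x‖ₑ := by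
  induction d generalizing m i with
  | zero =>
    rcases em (∃ x ∈ dyadicIco m i, t < ‖condE m f x‖) with h | h
    · exact ofReal_mul_volume_le_of_exists_lt_norm_condE (Nat.le_add_right m 0) h
    have hS : dyadicIco m i ∩ {x | t < dyadicMaximal f m (m + 0) x} = ∅ := by
      refine eq_empty_iff_forall_notMem.mpr fun x ⟨hx, htx⟩ => h ⟨x, hx, ?_⟩
      simpa [dyadicMaximal_self] using htx
    rw [hS]
    simp
  | succ d ih =>
    rcases em (∃ x ∈ dyadicIco m i, t < ‖condE m f x‖) with h | h
    · exact ofReal_mul_volume_le_of_exists_lt_norm_condE (Nat.le_add_right m _) h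
    push Not at h
    set S := {x | t < dyadicMaximal f (m + 1) (m + 1 + d) x}
    have hS : MeasurableSet S := measurableSet_lt measurable_const
      (measurable_dyadicMaximal f _ _).coe_nnreal_real
    have hsplit : dyadicIco m i ∩ {x | t < dyadicMaximal f m (m + (d + 1)) x} =
        dyadicIco (m + 1) (2 * i) ∩ S ∪ dyadicIco (m + 1) (2 * i + 1) ∩ S := by
      rw [← union_inter_distrib_right, dyadicIco_union]
      ext x
      refine and_congr_right fun hx => ?_
      change t < dyadicMaximal f m (m + (d + 1)) x ↔ t < dyadicMaximal f (m + 1) (m + 1 + d) x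
      rw [dyadicMaximal_eq_max f (by omega), NNReal.coe_max, lt_max_iff, coe_nnnorm,
        show m + (d + 1) = m + 1 + d by omega]
      exact or_iff_right (h x hx).not_gt
    have hdisj : Disjoint (dyadicIco (m + 1) (2 * i) ∩ S) (dyadicIco (m + 1) (2 * i + 1) ∩ S) :=
      (disjoint_dyadicIco m i).mono inter_subset_left inter_subset_left
    have hS₂ := (measurableSet_dyadicIco (m + 1) (2 * i + 1)).inter hS
    rw [hsplit, measure_union hdisj hS₂, lintegral_union hS₂ hdisj, mul_add]
    exact add_le_add (ih (m + 1) (2 * i)) (ih (m + 1) (2 * i + 1))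

instance : IsProbabilityMeasure μΩ := ⟨by simp [μΩ]⟩

theorem enorm_condE_le_lintegral_μΩ {x : ℝ} (hx : x ∈ Ico (0 : ℝ) 1) (k : ℕ) (f : ℝ → ℂ) :
    ‖condE k f x‖ₑ ≤ 2 ^ k * ∫⁻ t, ‖f t‖ₑ ∂μΩ :=
  (enorm_condE_le k f x).trans <| by
    gcongr
    exact Measure.restrict_mono (dyadicIco_floor_subset hx) le_rfl

theorem coe_dyadicMaximal_le {x : ℝ} (hx : x ∈ Ico (0 : ℝ) 1) (f : ℝ → ℂ) (N : ℕ) :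
    (dyadicMaximal f 0 N x : ℝ≥0∞) ≤ 2 ^ N * ∫⁻ t, ‖f t‖ₑ ∂μΩ := by
  rw [dyadicMaximal, ENNReal.coe_finset_sup, Finset.sup_le_iff]
  intro k hk
  calc (‖condE k f x‖₊ : ℝ≥0∞) = ‖condE k f x‖ₑ := rfl
    _ ≤ 2 ^ k * ∫⁻ t, ‖f t‖ₑ ∂μΩ := enorm_condE_le_lintegral_μΩ hx k f
    _ ≤ 2 ^ N * ∫⁻ t, ‖f t‖ₑ ∂μΩ := by
        gcongr
        · norm_num
        · exact (Finset.mem_Icc.mp hk).2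

theorem eLpNorm_dyadicMaximal_le {f : ℝ → ℂ} (hf : MemLp f 2 μΩ) (N : ℕ) :
    eLpNorm (fun x => (dyadicMaximal f 0 N x : ℝ)) 2 μΩ ≤ 2 * eLpNorm f 2 μΩ := by
  rw [← eLpNorm_enorm f]
  refine eLpNorm_two_le_two_mul_of_weakType (fun x => NNReal.coe_nonneg _)
    (measurable_dyadicMaximal f 0 N).coe_nnreal_real ?_ hf.aestronglyMeasurable.enorm ?_
  · have hbound : ∀ᵐ x ∂μΩ, ‖(dyadicMaximal f 0 N x : ℝ)‖ₑ ≤ 2 ^ N * ∫⁻ t, ‖f t‖ₑ ∂μΩ := by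
      filter_upwards [ae_restrict_mem measurableSet_Ico] with x hx
      simpa using coe_dyadicMaximal_le hx f N
    refine ((eLpNorm_le_of_ae_enorm_bound hbound).trans_lt ?_).ne
    simpa using ENNReal.mul_lt_top (by simp) (hf.integrable one_le_two).hasFiniteIntegral
  · intro t _
    have h := dyadicMaximal_weakType f t N 0 0
    rwa [zero_add, dyadicIco_zero_zero, inter_comm, ← Measure.restrict_apply' measurableSet_Ico,
      ← Measure.restrict_restrict' measurableSet_Ico] at h

theorem sum_range_mul_sub_eq_sum_sub_mul {R : Type*} [CommRing R] (b c : ℕ → R) (N : ℕ)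
    (hb₀ : b 0 = 0) (hb : b (N + 1) = 0) :
    ∑ k ∈ Finset.range N, b (k + 1) * (c (k + 1) - c k) =
      ∑ k ∈ Finset.range (N + 1), (b k - b (k + 1)) * c k := by
  simp only [mul_sub, sub_mul, Finset.sum_sub_distrib]
  rw [Finset.sum_range_succ' (fun k => b k * c k), Finset.sum_range_succ (fun k => b (k + 1) * c k),
    hb₀, hb]
  ring

theorem sum_mul_mdiff_eq_sum_sub_mul_condE {M N : ℕ} (A : Fin M → Fin N → ℂ) (j : Fin M)
    (f : ℝ → ℂ) (x : ℝ) :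
    ∑ k : Fin N, A j k * mdiff ((k : ℕ) + 1) f x =
      ∑ k ∈ Finset.range (N + 1), (aExt A j k - aExt A j (k + 1)) * condE k f x := by
  rw [← sum_range_mul_sub_eq_sum_sub_mul (aExt A j) (fun k => condE k f x) N (by simp [aExt])
    (by simp [aExt]), ← Fin.sum_univ_eq_sum_range
      (fun k => aExt A j (k + 1) * (condE (k + 1) f x - condE k f x))]
  refine Finset.sum_congr rfl fun k _ => ?_
  simp [aExt, mdiff]

theorem maxFn_le_mul_dyadicMaximal {M N : ℕ} (A : Fin M → Fin N → ℂ) (f : ℝ → ℂ) (x : ℝ) :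
    maxFn A f x ≤
      (⨆ j : Fin M, ∑ k ∈ Finset.range (N + 1), ‖aExt A j k - aExt A j (k + 1)‖) *
        dyadicMaximal f 0 N x := by
  set V := ⨆ j : Fin M, ∑ k ∈ Finset.range (N + 1), ‖aExt A j k - aExt A j (k + 1)‖
  have hV : 0 ≤ V := Real.iSup_nonneg fun j => Finset.sum_nonneg fun k _ => norm_nonneg _
  refine Real.iSup_le (fun j => ?_) (mul_nonneg hV (NNReal.coe_nonneg _))
  rw [sum_mul_mdiff_eq_sum_sub_mul_condE]
  calc ‖∑ k ∈ Finset.range (N + 1), (aExt A j k - aExt A j (k + 1)) * condE k f x‖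
      ≤ ∑ k ∈ Finset.range (N + 1), ‖aExt A j k - aExt A j (k + 1)‖ * ‖condE k f x‖ :=
        norm_sum_le_of_le _ fun k _ => norm_mul_le _ _
    _ ≤ ∑ k ∈ Finset.range (N + 1), ‖aExt A j k - aExt A j (k + 1)‖ * dyadicMaximal f 0 N x := by
        gcongr with k hk
        exact nnnorm_condE_le_dyadicMaximal k.zero_le (Finset.mem_range_succ_iff.mp hk) x
    _ ≤ V * dyadicMaximal f 0 N x := by
        rw [← Finset.sum_mul]
        gcongr
        exact le_ciSup (f := fun j => ∑ k ∈ Finset.range (N + 1), ‖aExt A j k - aExt A j (k + 1)‖)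
          (Finite.bddAbove_range _) j

/-- **Theorem.** There is an absolute constant `C` such that for every complex
`M × N` matrix `A`, `h_2(A) ≤ C · sup_{1≤j≤M} Σ_{k=0}^{N} |a_{jk} − a_{j,k+1}|`
(with `a_{j0} = a_{j,N+1} = 0`). -/
theorem h_le_bounded_variation :
    ∃ C : ℝ, 0 < C ∧
      ∀ (M N : ℕ) (A : Fin M → Fin N → ℂ),
        hStrong 2 A ≤
          ENNReal.ofReal
            (C * ⨆ j : Fin M, ∑ k ∈ Finset.range (N + 1), ‖aExt A j k - aExt A j (k + 1)‖) := by
  refine ⟨2, two_pos, fun M N A => sInf_le fun f hf => ?_⟩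
  rw [ENNReal.ofReal_ofNat] at hf ⊢
  set V := ⨆ j : Fin M, ∑ k ∈ Finset.range (N + 1), ‖aExt A j k - aExt A j (k + 1)‖
  have hmax : ∀ᵐ x ∂μΩ, ‖maxFn A f x‖ ≤ V * ‖(dyadicMaximal f 0 N x : ℝ)‖ :=
    ae_of_all _ fun x => by
      rw [Real.norm_of_nonneg (show 0 ≤ maxFn A f x from Real.iSup_nonneg fun _ => norm_nonneg _),
        NNReal.norm_eq]
      exact maxFn_le_mul_dyadicMaximal A f x
  calc eLpNorm (maxFn A f) 2 μΩ
      ≤ ENNReal.ofReal V * eLpNorm (fun x => (dyadicMaximal f 0 N x : ℝ)) 2 μΩ :=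
        eLpNorm_le_mul_eLpNorm_of_ae_le_mul hmax 2
    _ ≤ ENNReal.ofReal V * (2 * eLpNorm f 2 μΩ) := by
        gcongr
        exact eLpNorm_dyadicMaximal_le hf N
    _ = ENNReal.ofReal (2 * V) * eLpNorm f 2 μΩ := by
        rw [ENNReal.ofReal_mul zero_le_two, ENNReal.ofReal_ofNat, ← mul_assoc, mul_comm _ 2]
end
end

section
/- Let 0<θ<1/2. For every N∈ℕ there exists a complex 2^N×N matrix A=(a_{jk}) whose entries satisfy |a_{jk}| = N^{−θ} ≤ 2(log(2+|j−k|))^{−θ} for all 1≤j≤2^N, 1≤k≤N, and such that h_2(A) ≥ N^{1/2−θ}; that is, there exists f∈L_2(Ω) with ‖max_{1≤j≤2^N}|Σ_{k=1}^N a_{jk}Δ_k f|‖_{L_2(Ω)} ≥ N^{1/2−θ}‖f‖_{L_2(Ω)}. Consequently there is no finite constant C with h_2(A) ≤ C·max_{j,k}|a_{jk}|(log(2+|j−k|))^{θ} valid for all finite matrices A when 0<θ<1/2. -/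
open MeasureTheory
open scoped ENNReal NNReal

noncomputable section

/-!
Take `f = r₁ + ⋯ + r_N` with Rademacher functions `r_k(x) = (-1)^⌊2^k x⌋`. Each `r_{k+1}` is
constant on dyadic intervals of generation `> k` and has mean zero on those of generation `≤ k`,
so `Δ_k f = r_k` and, by orthogonality, `‖f‖₂ = √N`. Let the `2^N` rows of `A` be `N^{-θ}` times
all sign patterns in `{±1}^N`: at every point some row reproduces the signs of `r_k(x)`, so the
maximal function is identically `N^{1-θ} = N^{1/2-θ} √N`. As `|j - k| < 2^N`, the weight
`log(2 + |j - k|)` is at most `2N`, whence `|a_{jk}| (log(2 + |j - k|))^θ ≤ 2^θ ≤ 2`, while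
`h₂(A) ≥ N^{1/2-θ} → ∞`.
-/

open Set

namespace DyadicCounterexample

def dyadicIco (k : ℕ) (i : ℤ) : Set ℝ := Ico ((i : ℝ) / 2 ^ k) (((i : ℝ) + 1) / 2 ^ k)

theorem mem_dyadicIco_iff {k : ℕ} {i : ℤ} {x : ℝ} : x ∈ dyadicIco k i ↔ ⌊(2 : ℝ) ^ k * x⌋ = i := by
  have h2k : (0 : ℝ) < 2 ^ k := by positivity
  rw [dyadicIco, mem_Ico, div_le_iff₀ h2k, lt_div_iff₀ h2k, Int.floor_eq_iff, mul_comm x]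

theorem mem_dyadicIco_floor (k : ℕ) (x : ℝ) : x ∈ dyadicIco k ⌊(2 : ℝ) ^ k * x⌋ :=
  mem_dyadicIco_iff.2 rfl

theorem condE_eq (k : ℕ) (f : ℝ → ℂ) (x : ℝ) :
    condE k f x = 2 ^ k * ∫ t in dyadicIco k ⌊(2 : ℝ) ^ k * x⌋, f t := rfl

theorem measurableSet_dyadicIco (k : ℕ) (i : ℤ) : MeasurableSet (dyadicIco k i) :=
  measurableSet_Ico

theorem volume_real_dyadicIco (k : ℕ) (i : ℤ) : volume.real (dyadicIco k i) = (2 ^ k)⁻¹ := by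
  rw [measureReal_def, dyadicIco, Real.volume_Ico, add_div, add_sub_cancel_left, one_div,
    ENNReal.toReal_ofReal (by positivity)]

theorem floor_two_pow_mul_of_le {k m : ℕ} (hkm : k ≤ m) (x : ℝ) :
    ⌊(2 : ℝ) ^ k * x⌋ = ⌊(2 : ℝ) ^ m * x⌋ / 2 ^ (m - k) := by
  have h : (2 : ℝ) ^ k * x = 2 ^ m * x / ((2 ^ (m - k) : ℕ) : ℝ) := by
    rw [Nat.cast_pow, Nat.cast_ofNat, eq_div_iff (by positivity), mul_right_comm, ← pow_add,
      Nat.add_sub_cancel' hkm]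
  rw [h, Int.floor_div_natCast]
  norm_cast

theorem dyadicIco_eq_union (k : ℕ) (i : ℤ) :
    dyadicIco k i = dyadicIco (k + 1) (2 * i) ∪ dyadicIco (k + 1) (2 * i + 1) := by
  ext x
  rw [mem_union, mem_dyadicIco_iff, mem_dyadicIco_iff, mem_dyadicIco_iff,
    floor_two_pow_mul_of_le (Nat.le_add_right k 1), Nat.add_sub_cancel_left, pow_one]
  omega

theorem disjoint_dyadicIco_succ (k : ℕ) (i : ℤ) :
    Disjoint (dyadicIco (k + 1) (2 * i)) (dyadicIco (k + 1) (2 * i + 1)) := by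
  rw [Set.disjoint_left]
  intro x hx hx'
  rw [mem_dyadicIco_iff] at hx hx'
  omega

theorem integrableOn_dyadicIco_of_bound {g : ℝ → ℝ} (hg : Measurable g) {C : ℝ}
    (hC : ∀ x, |g x| ≤ C) (k : ℕ) (i : ℤ) : IntegrableOn g (dyadicIco k i) :=
  Integrable.of_bound (μ := volume.restrict (Ico _ _)) hg.aestronglyMeasurable C (ae_of_all _ hC)

theorem setIntegral_dyadicIco_eq_zero_of_le {g : ℝ → ℝ}
    (hg : ∀ k i, IntegrableOn g (dyadicIco k i)) {m n : ℕ} (hmn : m ≤ n)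
    (hn : ∀ i, ∫ x in dyadicIco n i, g x = 0) (i : ℤ) :
    ∫ x in dyadicIco m i, g x = 0 := by
  induction hmn using Nat.decreasingInduction generalizing i with
  | self => exact hn i
  | of_succ k _ ih =>
    rw [dyadicIco_eq_union, setIntegral_union (disjoint_dyadicIco_succ k i)
      (measurableSet_dyadicIco _ _) (hg _ _) (hg _ _), ih, ih, add_zero]

def rademacher (k : ℕ) (x : ℝ) : ℝ := (-1) ^ ⌊(2 : ℝ) ^ k * x⌋

theorem rademacher_eq_of_mem_dyadicIco {k m : ℕ} (hkm : k ≤ m) {i : ℤ} {x : ℝ}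
    (hx : x ∈ dyadicIco m i) : rademacher k x = (-1) ^ (i / 2 ^ (m - k)) := by
  rw [rademacher, floor_two_pow_mul_of_le hkm, mem_dyadicIco_iff.1 hx]

theorem rademacher_eq_one_or_neg_one (k : ℕ) (x : ℝ) : rademacher k x = 1 ∨ rademacher k x = -1 :=
  (Int.even_or_odd _).imp Even.neg_one_zpow Odd.neg_one_zpow

theorem rademacher_mul_self (k : ℕ) (x : ℝ) : rademacher k x * rademacher k x = 1 := by
  rw [rademacher, ← zpow_add₀ (by norm_num), ← two_mul, zpow_mul]
  norm_num

theorem abs_rademacher (k : ℕ) (x : ℝ) : |rademacher k x| = 1 := by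
  simp [rademacher, abs_zpow]

theorem measurable_rademacher (k : ℕ) : Measurable (rademacher k) :=
  measurable_from_top.comp (measurable_const.mul measurable_id).floor

theorem integrableOn_rademacher (k m : ℕ) (i : ℤ) : IntegrableOn (rademacher k) (dyadicIco m i) :=
  integrableOn_dyadicIco_of_bound (measurable_rademacher k) (fun x => (abs_rademacher k x).le) m i

theorem setIntegral_rademacher_of_lt {k m : ℕ} (hkm : k < m) {i : ℤ} {x : ℝ}
    (hx : x ∈ dyadicIco m i) :
    ∫ t in dyadicIco m i, rademacher (k + 1) t = (2 ^ m)⁻¹ * rademacher (k + 1) x := by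
  rw [setIntegral_congr_fun (measurableSet_dyadicIco m i)
    (fun t ht => rademacher_eq_of_mem_dyadicIco hkm ht), setIntegral_const,
    volume_real_dyadicIco, smul_eq_mul, rademacher_eq_of_mem_dyadicIco hkm hx]

theorem setIntegral_rademacher_succ (k : ℕ) (i : ℤ) :
    ∫ x in dyadicIco k i, rademacher (k + 1) x = 0 := by
  rw [dyadicIco_eq_union, setIntegral_union (disjoint_dyadicIco_succ k i)
    (measurableSet_dyadicIco _ _) (integrableOn_rademacher _ _ _) (integrableOn_rademacher _ _ _)]
  simp only [setIntegral_congr_fun (measurableSet_dyadicIco _ _)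
    (fun t ht => rademacher_eq_of_mem_dyadicIco le_rfl ht), setIntegral_const, smul_eq_mul,
    Nat.sub_self, pow_zero, Int.ediv_one]
  rw [Even.neg_one_zpow ⟨i, two_mul i⟩, Odd.neg_one_zpow ⟨i, rfl⟩, volume_real_dyadicIco,
    volume_real_dyadicIco]
  ring

theorem setIntegral_rademacher_of_le {m k : ℕ} (hmk : m ≤ k) (i : ℤ) :
    ∫ x in dyadicIco m i, rademacher (k + 1) x = 0 :=
  setIntegral_dyadicIco_eq_zero_of_le (integrableOn_rademacher _) hmk
    (setIntegral_rademacher_succ k) i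

theorem integrableOn_rademacher_mul (p q k : ℕ) (i : ℤ) :
    IntegrableOn (fun x => rademacher p x * rademacher q x) (dyadicIco k i) :=
  integrableOn_dyadicIco_of_bound ((measurable_rademacher p).mul (measurable_rademacher q))
    (C := 1) (fun x => by rw [Pi.mul_apply, abs_mul, abs_rademacher, abs_rademacher, mul_one]) k i

theorem dyadicIco_zero_zero : dyadicIco 0 0 = Ico 0 1 := by
  simp [dyadicIco]

theorem integral_rademacher_mul_of_lt {p q : ℕ} (hpq : p < q) :
    ∫ x in Ico 0 1, rademacher (p + 1) x * rademacher (q + 1) x = 0 := by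
  rw [← dyadicIco_zero_zero]
  refine setIntegral_dyadicIco_eq_zero_of_le (integrableOn_rademacher_mul _ _) q.zero_le
    (fun i => ?_) 0
  rw [setIntegral_congr_fun (measurableSet_dyadicIco q i)
    (fun t ht => congrArg (· * rademacher (q + 1) t) (rademacher_eq_of_mem_dyadicIco hpq ht)),
    integral_const_mul, setIntegral_rademacher_succ, mul_zero]

theorem integral_rademacher_mul (p q : ℕ) :
    ∫ x in Ico 0 1, rademacher (p + 1) x * rademacher (q + 1) x = if p = q then 1 else 0 := by
  rcases lt_trichotomy p q with hpq | rfl | hqp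
  · rw [if_neg hpq.ne, integral_rademacher_mul_of_lt hpq]
  · simp [rademacher_mul_self]
  · simp_rw [if_neg hqp.ne', mul_comm (rademacher (p + 1) _)]
    exact integral_rademacher_mul_of_lt hqp

theorem two_pow_mul_setIntegral_rademacher (k m : ℕ) (x : ℝ) :
    2 ^ m * ∫ t in dyadicIco m ⌊(2 : ℝ) ^ m * x⌋, rademacher (k + 1) t =
      if k < m then rademacher (k + 1) x else 0 := by
  split_ifs with hkm
  · rw [setIntegral_rademacher_of_lt hkm (mem_dyadicIco_floor m x), mul_inv_cancel_left₀
      (by positivity)]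
  · rw [setIntegral_rademacher_of_le (not_lt.1 hkm), mul_zero]

theorem condE_ofReal (m : ℕ) (g : ℝ → ℝ) (x : ℝ) :
    condE m (fun t => (g t : ℂ)) x =
      ((2 ^ m * ∫ t in dyadicIco m ⌊(2 : ℝ) ^ m * x⌋, g t : ℝ) : ℂ) := by
  rw [condE_eq, integral_complex_ofReal]
  push_cast
  rfl

def rademacherSum (N : ℕ) (x : ℝ) : ℝ := ∑ k ∈ Finset.range N, rademacher (k + 1) x

theorem condE_rademacherSum (N m : ℕ) (x : ℝ) :
    condE m (fun t => (rademacherSum N t : ℂ)) x =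
      ((∑ k ∈ Finset.range N, if k < m then rademacher (k + 1) x else 0 : ℝ) : ℂ) := by
  unfold rademacherSum
  rw [condE_ofReal, integral_finsetSum _ (fun k _ => integrableOn_rademacher _ _ _),
    Finset.mul_sum]
  simp_rw [two_pow_mul_setIntegral_rademacher]

theorem mdiff_rademacherSum {N k : ℕ} (hk : k < N) (x : ℝ) :
    mdiff (k + 1) (fun t => (rademacherSum N t : ℂ)) x = rademacher (k + 1) x := by
  rw [mdiff, condE_rademacherSum, condE_rademacherSum, Nat.add_sub_cancel, ← Complex.ofReal_sub,
    ← Finset.sum_sub_distrib, Finset.sum_eq_single_of_mem k (Finset.mem_range.2 hk)]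
  · simp
  · intro j _ hjk
    rcases hjk.lt_or_gt with h | h
    · simp [h, h.trans k.lt_succ_self]
    · simp [h.not_gt, (Nat.succ_le_of_lt h).not_gt]

theorem abs_rademacherSum_le (N : ℕ) (x : ℝ) : |rademacherSum N x| ≤ N := by
  calc |rademacherSum N x| ≤ ∑ k ∈ Finset.range N, |rademacher (k + 1) x| :=
        Finset.abs_sum_le_sum_abs _ _
    _ = N := by simp [abs_rademacher]

theorem integral_rademacherSum_sq (N : ℕ) : ∫ x in Ico 0 1, rademacherSum N x ^ 2 = N := by
  have hint (p q : ℕ) := dyadicIco_zero_zero ▸ integrableOn_rademacher_mul (p + 1) (q + 1) 0 0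
  simp_rw [sq, rademacherSum, Finset.sum_mul_sum]
  rw [integral_finsetSum _ fun p _ => integrable_finsetSum _ fun q _ => hint p q]
  simp_rw [integral_finsetSum _ fun q _ => hint _ q, integral_rademacher_mul, Finset.sum_ite_eq]
  rw [Finset.sum_congr rfl fun p hp => if_pos hp]
  simp

instance : IsProbabilityMeasure μΩ :=
  ⟨by rw [μΩ, Measure.restrict_apply_univ, Real.volume_Ico, sub_zero, ENNReal.ofReal_one]⟩

theorem memLp_rademacherSum (N : ℕ) : MemLp (fun x => (rademacherSum N x : ℂ)) 2 μΩ :=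
  (memLp_top_of_bound (Complex.measurable_ofReal.comp (f := rademacherSum N)
    (Finset.measurable_sum _ fun k _ => measurable_rademacher (k + 1))).aestronglyMeasurable N
    (ae_of_all _ fun x => by
      rw [Function.comp_apply, Complex.norm_real, Real.norm_eq_abs]
      exact abs_rademacherSum_le N x)).mono_exponent le_top

theorem eLpNorm_rademacherSum (N : ℕ) :
    eLpNorm (fun x => (rademacherSum N x : ℂ)) 2 μΩ = ENNReal.ofReal (Real.sqrt N) := by
  rw [(memLp_rademacherSum N).eLpNorm_eq_integral_rpow_norm two_ne_zero ENNReal.ofNat_ne_top]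
  simp only [Complex.norm_real, Real.norm_eq_abs, ENNReal.toReal_ofNat, Real.rpow_two, sq_abs]
  rw [μΩ, integral_rademacherSum_sq, Real.sqrt_eq_rpow, one_div]

def signMatrix (c : ℝ) (N : ℕ) : Fin (2 ^ N) → Fin N → ℂ :=
  fun j k => c * (-1) ^ (finFunctionFinEquiv.symm j k : ℕ)

theorem norm_signMatrix {c : ℝ} (hc : 0 ≤ c) (N : ℕ) (j : Fin (2 ^ N)) (k : Fin N) :
    ‖signMatrix c N j k‖ = c := by
  simp [signMatrix, abs_of_nonneg hc]

theorem exists_signMatrix_row_eq (c : ℝ) {N : ℕ} (ε : Fin N → ℝ)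
    (hε : ∀ k, ε k = 1 ∨ ε k = -1) : ∃ j, ∀ k, signMatrix c N j k = c * ε k := by
  refine ⟨finFunctionFinEquiv fun k => if ε k = 1 then 0 else 1, fun k => ?_⟩
  rcases hε k with h | h <;> simp [signMatrix, h, show (-1 : ℝ) ≠ 1 by norm_num]

theorem le_maxFn_signMatrix {c : ℝ} (hc : 0 ≤ c) (N : ℕ) (x : ℝ) :
    N * c ≤ maxFn (signMatrix c N) (fun t => (rademacherSum N t : ℂ)) x := by
  obtain ⟨j, hj⟩ := exists_signMatrix_row_eq c (fun k : Fin N => rademacher (k + 1) x)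
    fun k => rademacher_eq_one_or_neg_one _ x
  calc (N : ℝ) * c
      = ‖∑ k : Fin N, signMatrix c N j k * mdiff (k + 1) (fun t => (rademacherSum N t : ℂ)) x‖ := by
        simp_rw [hj, mdiff_rademacherSum (Fin.is_lt _), mul_assoc, ← Complex.ofReal_mul,
          rademacher_mul_self]
        simp [abs_of_nonneg hc]
    _ ≤ maxFn (signMatrix c N) (fun t => (rademacherSum N t : ℂ)) x :=
        le_ciSup (f := fun j => ‖∑ k : Fin N, signMatrix c N j k *
          mdiff (k + 1) (fun t => (rademacherSum N t : ℂ)) x‖) (Finite.bddAbove (finite_range _)) j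

theorem ofReal_le_eLpNorm_of_forall_le {α : Type*} [MeasurableSpace α] {μ : Measure α}
    [IsProbabilityMeasure μ] {p : ℝ≥0∞} (hp : p ≠ 0) {g : α → ℝ} {c : ℝ} (hc : 0 ≤ c)
    (h : ∀ x, c ≤ g x) : ENNReal.ofReal c ≤ eLpNorm g p μ := by
  calc ENNReal.ofReal c = eLpNorm (fun _ => c) p μ := by
        rw [eLpNorm_const _ hp (IsProbabilityMeasure.ne_zero μ), measure_univ, ENNReal.one_rpow,
          mul_one, Real.enorm_of_nonneg hc]
    _ ≤ eLpNorm g p μ :=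
        eLpNorm_mono_ae_real (ae_of_all _ fun x => by rw [Real.norm_of_nonneg hc]; exact h x)

theorem rpow_mul_eLpNorm_rademacherSum_le (θ : ℝ) {N : ℕ} (hN : 0 < N) :
    ENNReal.ofReal ((N : ℝ) ^ ((1 : ℝ) / 2 - θ)) * eLpNorm (fun t => (rademacherSum N t : ℂ)) 2 μΩ ≤
      eLpNorm (maxFn (signMatrix ((N : ℝ) ^ (-θ)) N) fun t => (rademacherSum N t : ℂ)) 2 μΩ := by
  have hN' : (0 : ℝ) < N := Nat.cast_pos.2 hN
  have hexp : (N : ℝ) ^ ((1 : ℝ) / 2 - θ) * Real.sqrt N = N * (N : ℝ) ^ (-θ) := by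
    rw [Real.sqrt_eq_rpow, ← Real.rpow_add hN', show 1 / 2 - θ + 1 / 2 = 1 + -θ by ring,
      Real.rpow_add hN', Real.rpow_one]
  rw [eLpNorm_rademacherSum, ← ENNReal.ofReal_mul (by positivity), hexp]
  exact ofReal_le_eLpNorm_of_forall_le two_ne_zero (by positivity)
    (le_maxFn_signMatrix (by positivity) N)

theorem le_hStrong_two {M N : ℕ} (A : Fin M → Fin N → ℂ) {f : ℝ → ℂ} (hf : MemLp f 2 μΩ)
    (hf0 : eLpNorm f 2 μΩ ≠ 0) {c : ℝ≥0∞} (h : c * eLpNorm f 2 μΩ ≤ eLpNorm (maxFn A f) 2 μΩ) :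
    c ≤ hStrong 2 A := by
  refine le_sInf fun K hK => ?_
  have hKf := hK f (by rwa [ENNReal.ofReal_ofNat])
  rw [ENNReal.ofReal_ofNat] at hKf
  exact (ENNReal.mul_le_mul_iff_left hf0 hf.eLpNorm_ne_top).1 (h.trans hKf)

theorem eLpNorm_rademacherSum_ne_zero {N : ℕ} (hN : 0 < N) :
    eLpNorm (fun t => (rademacherSum N t : ℂ)) 2 μΩ ≠ 0 := by
  rw [eLpNorm_rademacherSum, ne_eq, ENNReal.ofReal_eq_zero, not_le, Real.sqrt_pos]
  exact Nat.cast_pos.2 hN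

theorem rpow_le_hStrong_signMatrix (θ : ℝ) {N : ℕ} (hN : 0 < N) :
    ENNReal.ofReal ((N : ℝ) ^ ((1 : ℝ) / 2 - θ)) ≤ hStrong 2 (signMatrix ((N : ℝ) ^ (-θ)) N) :=
  le_hStrong_two _ (memLp_rademacherSum N) (eLpNorm_rademacherSum_ne_zero hN)
    (rpow_mul_eLpNorm_rademacherSum_le θ hN)

theorem one_le_logb_two_add {d : ℝ} (hd : 0 ≤ d) : 1 ≤ Real.logb 2 (2 + d) :=
  (Real.le_logb_iff_rpow_le one_lt_two (by linarith)).2 (by rw [Real.rpow_one]; linarith)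

theorem logb_two_add_natAbs_sub_le {N : ℕ} (j : Fin (2 ^ N)) (k : Fin N) :
    Real.logb 2 (2 + (((j : ℤ) - (k : ℤ)).natAbs : ℝ)) ≤ 2 * N := by
  have hdist : ((j : ℤ) - (k : ℤ)).natAbs < 2 ^ N := by
    have := Nat.lt_two_pow_self (n := N)
    omega
  have htwo : 2 ≤ 2 ^ N := Nat.le_self_pow (Fin.pos k).ne' 2
  have hle : 2 + ((j : ℤ) - (k : ℤ)).natAbs ≤ 2 ^ (2 * N) := by
    rw [pow_mul']
    nlinarith
  rw [Real.logb_le_iff_le_rpow one_lt_two (by positivity),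
    show 2 * (N : ℝ) = ((2 * N : ℕ) : ℝ) by push_cast; ring, Real.rpow_natCast]
  exact_mod_cast hle

theorem rpow_neg_mul_rpow_le_two {θ x L : ℝ} (hθ0 : 0 ≤ θ) (hθ1 : θ ≤ 1) (hx : 0 < x)
    (hL0 : 0 ≤ L) (hL : L ≤ 2 * x) : x ^ (-θ) * L ^ θ ≤ 2 :=
  calc x ^ (-θ) * L ^ θ ≤ x ^ (-θ) * (2 * x) ^ θ := by gcongr
    _ = 2 ^ θ := by
        rw [Real.mul_rpow zero_le_two hx.le, Real.rpow_neg hx.le]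
        field_simp
    _ ≤ 2 := by simpa using Real.rpow_le_rpow_of_exponent_le one_le_two hθ1

theorem norm_signMatrix_mul_logb_rpow_le_two {θ : ℝ} (hθ0 : 0 ≤ θ) (hθ1 : θ ≤ 1) {N : ℕ}
    (j : Fin (2 ^ N)) (k : Fin N) :
    ‖signMatrix ((N : ℝ) ^ (-θ)) N j k‖ *
      Real.logb 2 (2 + (((j : ℤ) - (k : ℤ)).natAbs : ℝ)) ^ θ ≤ 2 := by
  rw [norm_signMatrix (by positivity)]
  exact rpow_neg_mul_rpow_le_two hθ0 hθ1 (Nat.cast_pos.2 (Fin.pos k))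
    (zero_le_one.trans (one_le_logb_two_add (Nat.cast_nonneg _))) (logb_two_add_natAbs_sub_le j k)

theorem norm_signMatrix_le_two_mul_logb_rpow_neg {θ : ℝ} (hθ0 : 0 ≤ θ) (hθ1 : θ ≤ 1) {N : ℕ}
    (j : Fin (2 ^ N)) (k : Fin N) :
    ‖signMatrix ((N : ℝ) ^ (-θ)) N j k‖ ≤
      2 * Real.logb 2 (2 + (((j : ℤ) - (k : ℤ)).natAbs : ℝ)) ^ (-θ) := by
  have hL := zero_lt_one.trans_le (one_le_logb_two_add (Nat.cast_nonneg (((j : ℤ) - k).natAbs)))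
  rw [Real.rpow_neg hL.le, ← div_eq_mul_inv, le_div_iff₀ (by positivity)]
  exact norm_signMatrix_mul_logb_rpow_le_two hθ0 hθ1 j k

theorem iSup_norm_signMatrix_mul_logb_rpow_mem_Icc {θ : ℝ} (hθ0 : 0 ≤ θ) (hθ1 : θ ≤ 1)
    (N : ℕ) :
    (⨆ j : Fin (2 ^ N), ⨆ k : Fin N, ‖signMatrix ((N : ℝ) ^ (-θ)) N j k‖ *
      Real.logb 2 (2 + (((j : ℤ) - (k : ℤ)).natAbs : ℝ)) ^ θ) ∈ Icc 0 2 :=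
  ⟨Real.iSup_nonneg fun _ => Real.iSup_nonneg fun _ => mul_nonneg (norm_nonneg _)
    (Real.rpow_nonneg (zero_le_one.trans (one_le_logb_two_add (Nat.cast_nonneg _))) _),
   Real.iSup_le (fun j => Real.iSup_le (norm_signMatrix_mul_logb_rpow_le_two hθ0 hθ1 j)
    zero_le_two) zero_le_two⟩

end DyadicCounterexample

open DyadicCounterexample

/-- **Theorem.** For `0 < θ < 1/2` the logarithmic condition
`|a_{jk}| ≤ 2(log(2+|j−k|))^{−θ}` does not bound `h_2(A)`:  for every `N ≥ 1` there is a
`2^N × N` matrix `A` with `|a_{jk}| = N^{−θ} ≤ 2(log(2+|j−k|))^{−θ}` and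
`h_2(A) ≥ N^{1/2−θ}`, witnessed by a nonzero `f ∈ L_2(Ω)` with
`‖max_j |Σ_k a_{jk}Δ_k f|‖_{L_2} ≥ N^{1/2−θ}‖f‖_{L_2}`.  Consequently no finite constant
`C` satisfies `h_2(A) ≤ C·max_{j,k}|a_{jk}|(log(2+|j−k|))^{θ}` for all finite matrices. -/
theorem log_condition_fails_below_half (θ : ℝ) (hθ0 : 0 < θ) (hθ : θ < 1 / 2) :
    (∀ N : ℕ, 1 ≤ N →
      ∃ A : Fin (2 ^ N) → Fin N → ℂ,
        (∀ j k, ‖A j k‖ = (N : ℝ) ^ (-θ)) ∧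
        (∀ (j : Fin (2 ^ N)) (k : Fin N),
          ‖A j k‖ ≤ 2 * Real.logb 2 (2 + (((j : ℤ) - (k : ℤ)).natAbs : ℝ)) ^ (-θ)) ∧
        ENNReal.ofReal ((N : ℝ) ^ ((1 : ℝ) / 2 - θ)) ≤ hStrong 2 A ∧
        ∃ f : ℝ → ℂ, MemLp f 2 μΩ ∧ eLpNorm f 2 μΩ ≠ 0 ∧
          ENNReal.ofReal ((N : ℝ) ^ ((1 : ℝ) / 2 - θ)) * eLpNorm f 2 μΩ ≤
            eLpNorm (maxFn A f) 2 μΩ) ∧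
    ¬ ∃ C : ℝ, ∀ (M N : ℕ) (A : Fin M → Fin N → ℂ),
        hStrong 2 A ≤
          ENNReal.ofReal
            (C * ⨆ j : Fin M, ⨆ k : Fin N,
              ‖A j k‖ * Real.logb 2 (2 + (((j : ℤ) - (k : ℤ)).natAbs : ℝ)) ^ θ) := by
  have hθ1 : θ ≤ 1 := by linarith
  refine ⟨fun N hN => ⟨signMatrix ((N : ℝ) ^ (-θ)) N, norm_signMatrix (by positivity) N,
    norm_signMatrix_le_two_mul_logb_rpow_neg hθ0.le hθ1, rpow_le_hStrong_signMatrix θ hN,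
    _, memLp_rademacherSum N, eLpNorm_rademacherSum_ne_zero hN,
    rpow_mul_eLpNorm_rademacherSum_le θ hN⟩, ?_⟩
  rintro ⟨C, hC⟩
  obtain ⟨N, hNC, hN⟩ := (((tendsto_rpow_atTop (sub_pos.2 hθ)).comp
    tendsto_natCast_atTop_atTop).eventually_gt_atTop (2 * |C|)).and (Filter.eventually_gt_atTop 0)
    |>.exists
  rw [Function.comp_apply] at hNC
  obtain ⟨hS0, hS2⟩ := iSup_norm_signMatrix_mul_logb_rpow_mem_Icc hθ0.le hθ1 N
  have hCS := ENNReal.ofReal_le_ofReal_iff'.1 ((rpow_le_hStrong_signMatrix θ hN).trans (hC _ _ _))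
  have hpos : (0 : ℝ) < (N : ℝ) ^ ((1 : ℝ) / 2 - θ) := by positivity
  rcases hCS with hCS | hCS
  · nlinarith [le_abs_self C, abs_nonneg C]
  · linarith
end
end
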